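/- Let (𝔙, 𝔙⁺, |·|) be a non-degenerate absolutely ordered 𝔉-bimodule and let (V, {Mₙ(V)⁺}) be the matrix ordered space with V = 𝔍₁𝔙𝔍₁ and Mₙ(V)⁺ = Tₙ⁻¹(𝔍ₙ𝔙⁺𝔍ₙ). Define |v|ₙ := Tₙ⁻¹(|Tₙ(v)|) for v ∈ Mₙ(V). Then for all u ∈ M_m(V) and v ∈ Mₙ(V), one has |u ⊕ v|_{m+n} = |u|_m ⊕ |v|ₙ, and (V, {Mₙ(V)⁺}, {|·|ₙ}) is an absolutely matrix ordered space. -/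

import Mathlib

noncomputable section

open scoped Matrix.Norms.L2Operator

/-! ### The *-algebra 𝔉 of ∞×∞ complex matrices with finitely many nonzero entries -/

/-- `∞ × ∞` complex matrices (indexed by `ℕ × ℕ`). -/
abbrev FMat := ℕ → ℕ → ℂ

/-- The matrix has (at most) finitely many nonzero entries: it is supported in some
`n × n` top-left block. -/
def IsFin (a : FMat) : Prop := ∃ n, ∀ i j, (n ≤ i ∨ n ≤ j) → a i j = 0

/-- Matrix multiplication in `𝔉` (the `tsum` is a finite sum for finitely supported
matrices). -/
def fmul (a b : FMat) : FMat := fun i k => ∑' j, a i j * b j k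

/-- The involution (conjugate transpose) on `𝔉`. -/
def fstar (a : FMat) : FMat := fun i j => starRingEnd ℂ (a j i)

/-- The matrix unit `𝔢_{i,j}`. -/
def eUnit (i j : ℕ) : FMat := fun k l => if k = i ∧ l = j then 1 else 0

/-- `𝔍ₙ = Σ_{i<n} 𝔢_{i,i}`, the partial identities. -/
def JMat (n : ℕ) : FMat := fun k l => if k = l ∧ k < n then 1 else 0

/-- `𝔎ₙ = Σ_{i<n} 𝔢_{i,n+i}`, used for `2×2`-block constructions. -/
def KMat (n : ℕ) : FMat := fun k l => if l = k + n ∧ k < n then 1 else 0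

/-- The diagonal idempotent `Σ_{i ∈ s} 𝔢_{i,i}` associated to a finite set `s ⊂ ℕ`. -/
def finsetDiag (s : Finset ℕ) : FMat := fun k l => if k = l ∧ k ∈ s then 1 else 0

/-- The operator norm on `𝔉`: the supremum of the (C*-algebra) operator norms of the
finite top-left blocks (for a finitely supported matrix the blocks stabilize). -/
def fnorm (a : FMat) : ℝ :=
  ⨆ n : ℕ, ‖(Matrix.of fun i j : Fin n => a i j : Matrix (Fin n) (Fin n) ℂ)‖

/-- The order `o(𝔞)` of a finitely supported matrix: the least `n` such that `𝔞` is
supported in the top-left `n × n` block. -/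
def matOrd (a : FMat) : ℕ := sInf {n | ∀ i j, (n ≤ i ∨ n ≤ j) → a i j = 0}

/-- A local unitary in `𝔉`: `𝔞*𝔞 = 𝔍_{o(𝔞)} = 𝔞𝔞*`. -/
def IsLocalUnitary (a : FMat) : Prop :=
  IsFin a ∧ fmul (fstar a) a = JMat (matOrd a) ∧ fmul a (fstar a) = JMat (matOrd a)

/-! ### Non-degenerate *-𝔉-bimodules -/

/-- A non-degenerate `*`-`𝔉`-bimodule structure on a complex vector space `V`:
left and right actions of (finitely supported) infinite matrices together with an
involution, compatible with each other and with the complex scalars, such that every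
element is `𝔍ₙ·v·𝔍ₙ` for some `n`. -/
structure FBimod (V : Type*) [AddCommGroup V] [Module ℂ V] where
  lsmul : FMat → V → V
  rsmul : V → FMat → V
  star : V → V
  lsmul_add : ∀ a u v, lsmul a (u + v) = lsmul a u + lsmul a v
  rsmul_add : ∀ u v b, rsmul (u + v) b = rsmul u b + rsmul v b
  add_lsmul : ∀ a b v, IsFin a → IsFin b → lsmul (a + b) v = lsmul a v + lsmul b v
  rsmul_add' : ∀ v a b, IsFin a → IsFin b → rsmul v (a + b) = rsmul v a + rsmul v b
  smul_lsmul : ∀ (c : ℂ) a v, IsFin a → lsmul (c • a) v = c • lsmul a v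
  smul_rsmul : ∀ (c : ℂ) v a, IsFin a → rsmul v (c • a) = c • rsmul v a
  mul_lsmul : ∀ a b v, IsFin a → IsFin b → lsmul (fmul a b) v = lsmul a (lsmul b v)
  rsmul_mul : ∀ v a b, IsFin a → IsFin b → rsmul v (fmul a b) = rsmul (rsmul v a) b
  lsmul_rsmul : ∀ a v b, IsFin a → IsFin b → rsmul (lsmul a v) b = lsmul a (rsmul v b)
  star_add : ∀ u v, star (u + v) = star u + star v
  star_star : ∀ v, star (star v) = v
  star_lsmul : ∀ a v, IsFin a → star (lsmul a v) = rsmul (star v) (fstar a)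
  star_rsmul : ∀ v a, IsFin a → star (rsmul v a) = lsmul (fstar a) (star v)
  smul_compat : ∀ (c : ℂ) (n : ℕ) v, lsmul (JMat n) (rsmul v (JMat n)) = v →
    lsmul (c • JMat n) v = c • v
  nondeg : ∀ v, ∃ n, lsmul (JMat n) (rsmul v (JMat n)) = v

namespace FBimod

variable {V : Type*} [AddCommGroup V] [Module ℂ V] (M : FBimod V)

/-- `𝔍ₙ 𝔳 𝔍ₙ`. -/
def cut (n : ℕ) (v : V) : V := M.lsmul (JMat n) (M.rsmul v (JMat n))

/-- The order `o(𝔳)`: the smallest `n` with `𝔍ₙ 𝔳 𝔍ₙ = 𝔳`. -/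
def ord (v : V) : ℕ := sInf {n | M.cut n v = v}

/-- `𝔞* 𝔳 𝔞`. -/
def conj (a : FMat) (v : V) : V := M.lsmul (fstar a) (M.rsmul v a)

/-- `C` is a bimodule cone: consists of self-adjoint elements, is closed under
addition and under `𝔳 ↦ 𝔞*𝔳𝔞` for `𝔞 ∈ 𝔉`. -/
def IsCone (C : Set V) : Prop :=
  (∀ v ∈ C, M.star v = v) ∧ (∀ u ∈ C, ∀ v ∈ C, u + v ∈ C) ∧
    (∀ v ∈ C, ∀ a : FMat, IsFin a → M.conj a v ∈ C)

/-- The cone `C` is proper: `C ∩ (−C) = {0}`. -/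
def ConeProper (C : Set V) : Prop := ∀ v ∈ C, -v ∈ C → v = 0

/-- The cone `C` is Archimedean. -/
def ConeArch (C : Set V) : Prop :=
  ∀ u ∈ C, ∀ v : V, M.star v = v → (∀ k : ℝ, 0 < k → (k : ℂ) • u + v ∈ C) → v ∈ C

/-- The cone `C` is generating. -/
def ConeGen (C : Set V) : Prop :=
  ∀ v : V, ∃ v₀ ∈ C, ∃ v₁ ∈ C, ∃ v₂ ∈ C, ∃ v₃ ∈ C,
    v = v₀ + Complex.I • v₁ - v₂ - Complex.I • v₃

/-- `(𝔳₁, 𝔳₂)ₙ⁺ = 𝔳₁ + 𝔎ₙ* 𝔳₂ 𝔎ₙ` (the diagonal `2×2`-block `diag(𝔳₁,𝔳₂)`). -/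
def pairPlus (n : ℕ) (v₁ v₂ : V) : V :=
  v₁ + M.lsmul (fstar (KMat n)) (M.rsmul v₂ (KMat n))

/-- `saₙ(𝔳) = 𝔍ₙ 𝔳 𝔎ₙ + 𝔎ₙ* 𝔳* 𝔍ₙ` (the off-diagonal `2×2`-block of `𝔳`). -/
def san (n : ℕ) (v : V) : V :=
  M.lsmul (JMat n) (M.rsmul v (KMat n)) +
    M.lsmul (fstar (KMat n)) (M.rsmul (M.star v) (JMat n))

/-- `𝔲` and `𝔳` are `𝔉`-independent: compressed onto disjoint diagonal blocks. -/
def FIndep (u v : V) : Prop :=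
  ∃ I J : Finset ℕ, Disjoint I J ∧
    M.lsmul (finsetDiag I) (M.rsmul u (finsetDiag I)) = u ∧
    M.lsmul (finsetDiag J) (M.rsmul v (finsetDiag J)) = v

/-- `(𝔙, C, abs)` is a non-degenerate absolutely ordered `𝔉`-bimodule
(Definition 18 of the paper). -/
structure IsAbsOrd (C : Set V) (abs : V → V) : Prop where
  cone : M.IsCone C
  abs_mem : ∀ v, abs v ∈ C
  ord_abs_le : ∀ v, M.ord (abs v) ≤ M.ord v
  abs_of_mem : ∀ v ∈ C, abs v = v
  pos_part : ∀ v, M.pairPlus (M.ord v) (abs (M.star v)) (abs v) + M.san (M.ord v) v ∈ C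
  abs_smul_le : ∀ (a b : FMat), IsFin a → IsFin b → ∀ v,
    (fnorm a : ℂ) • abs (M.rsmul (abs v) b) - abs (M.lsmul a (M.rsmul v b)) ∈ C
  indep_add : ∀ u v, M.FIndep u v → abs (u + v) = abs u + abs v
  absorb : ∀ u ∈ C, ∀ v ∈ C, ∀ w ∈ C, abs (u - v) = u + v → v - w ∈ C →
    abs (u - w) = u + w
  ortho_pm : ∀ u ∈ C, ∀ v ∈ C, ∀ w ∈ C, abs (u - v) = u + v → abs (u - w) = u + w →
    abs (u - abs (v + w)) = u + abs (v + w) ∧ abs (u - abs (v - w)) = u + abs (v - w)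

/-- `eⁿ = Σ_{i<n} 𝔢_{i,0} 𝔢 𝔢_{0,i}` for an element `𝔢` of order `1`. -/
def epow (e : V) (n : ℕ) : V :=
  ∑ i ∈ Finset.range n, M.lsmul (eUnit i 0) (M.rsmul e (eUnit 0 i))

/-- `𝔢` is a local order unit for `(𝔙, C)`. -/
def IsLocalOrderUnit (C : Set V) (e : V) : Prop :=
  e ∈ C ∧ M.cut 1 e = e ∧ ∀ v : V, M.cut 1 v = v → ∃ k : ℝ, 0 < k ∧
    M.pairPlus 1 ((k : ℂ) • e) ((k : ℂ) • e) + M.san 1 v ∈ C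

/-- `(𝔙, C, 𝔢)` is a local `𝔉`-order unit bimodule. -/
def IsLocalUnitBimod (C : Set V) (e : V) : Prop :=
  M.IsCone C ∧ ConeProper C ∧ M.ConeArch C ∧ M.IsLocalOrderUnit C e

/-- The norm associated to a local order unit:
`‖𝔳‖ = inf { k > 0 : (k𝔢^{o(𝔳)}, k𝔢^{o(𝔳)})⁺_{o(𝔳)} + sa_{o(𝔳)}(𝔳) ∈ C }`. -/
def lnorm (C : Set V) (e : V) (v : V) : ℝ :=
  sInf {k : ℝ | 0 < k ∧
    M.pairPlus (M.ord v) ((k : ℂ) • M.epow e (M.ord v)) ((k : ℂ) • M.epow e (M.ord v)) +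
      M.san (M.ord v) v ∈ C}

/-- `𝔲 ⊥_∞ 𝔳` with respect to the local-order-unit norm. -/
def PerpInf (C : Set V) (e : V) (u v : V) : Prop :=
  ∀ k₁ k₂ : ℝ, M.lnorm C e ((k₁ : ℂ) • u + (k₂ : ℂ) • v) =
    max (M.lnorm C e ((k₁ : ℂ) • u)) (M.lnorm C e ((k₂ : ℂ) • v))

end FBimod
/-! ### Matrices over a complex *-vector space -/

section MatrixLevel

variable {V : Type*} [AddCommGroup V] [Module ℂ V] [StarAddMonoid V] [StarModule ℂ V]

/-- Conjugate transpose of a rectangular matrix over a `*`-vector space. -/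
def mstar {m n : ℕ} (v : Matrix (Fin m) (Fin n) V) : Matrix (Fin n) (Fin m) V :=
  fun i j => star (v j i)

/-- Left action of a scalar matrix: `(a v)_{ij} = Σ_k a_{ik} v_{kj}`. -/
def aSmul {r m n : ℕ} (a : Matrix (Fin r) (Fin m) ℂ) (v : Matrix (Fin m) (Fin n) V) :
    Matrix (Fin r) (Fin n) V :=
  fun i j => ∑ k, a i k • v k j

/-- Right action of a scalar matrix: `(v b)_{ij} = Σ_k b_{kj} • v_{ik}`. -/
def smulB {m n s : ℕ} (v : Matrix (Fin m) (Fin n) V) (b : Matrix (Fin n) (Fin s) ℂ) :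
    Matrix (Fin m) (Fin s) V :=
  fun i j => ∑ k, b k j • v i k

/-- Direct sum (block diagonal) of rectangular matrices over `V`. -/
def dsum {m n r s : ℕ} (v : Matrix (Fin m) (Fin n) V) (w : Matrix (Fin r) (Fin s) V) :
    Matrix (Fin (m + r)) (Fin (n + s)) V :=
  fun i j =>
    if hi : (i : ℕ) < m then
      (if hj : (j : ℕ) < n then v ⟨i, hi⟩ ⟨j, hj⟩ else 0)
    else
      (if hj : (j : ℕ) < n then 0
       else w ⟨(i : ℕ) - m, by have := i.isLt; omega⟩ ⟨(j : ℕ) - n, by have := j.isLt; omega⟩)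

end MatrixLevel

/-- The L2-operator norm of a rectangular complex scalar matrix. -/
def cnorm {r m : ℕ} (a : Matrix (Fin r) (Fin m) ℂ) : ℝ := ‖a‖

/-- Embedding of a finite rectangular complex matrix into `𝔉`. -/
def embC {r m : ℕ} (a : Matrix (Fin r) (Fin m) ℂ) : FMat :=
  fun i j => if hi : i < r then (if hj : j < m then a ⟨i, hi⟩ ⟨j, hj⟩ else 0) else 0

/-- `e ⊕ ⋯ ⊕ e`: the diagonal matrix with constant diagonal `e`. -/
def diagE {V : Type*} [AddCommGroup V] (e : V) (n : ℕ) : Matrix (Fin n) (Fin n) V :=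
  Matrix.of fun i j => if i = j then e else 0

/-! ### Absolutely matrix ordered spaces and absolute matrix order unit spaces -/

/-- An absolutely matrix ordered space structure on a complex `*`-vector space `V`:
matrix cones `Mₙ(V)⁺` and absolute values `|·|_{m,n} : M_{m,n}(V) → Mₙ(V)⁺`
(Definition 4.1 of Karn-Kumar). -/
structure AMOS (V : Type*) [AddCommGroup V] [Module ℂ V] [StarAddMonoid V]
    [StarModule ℂ V] where
  pos : ∀ n : ℕ, Set (Matrix (Fin n) (Fin n) V)
  abs : ∀ m n : ℕ, Matrix (Fin m) (Fin n) V → Matrix (Fin n) (Fin n) V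
  pos_star : ∀ n, ∀ v ∈ pos n, mstar v = v
  pos_add : ∀ n, ∀ u ∈ pos n, ∀ v ∈ pos n, u + v ∈ pos n
  pos_conj : ∀ m n (a : Matrix (Fin n) (Fin m) ℂ), ∀ v ∈ pos n,
    aSmul a.conjTranspose (smulB v a) ∈ pos m
  abs_mem : ∀ m n v, abs m n v ∈ pos n
  abs_of_pos : ∀ n, ∀ v ∈ pos n, abs n n v = v
  abs_add_self : ∀ n (v : Matrix (Fin n) (Fin n) V), mstar v = v →
    abs n n v + v ∈ pos n ∧ abs n n v - v ∈ pos n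
  abs_real_smul : ∀ n (k : ℝ) (v : Matrix (Fin n) (Fin n) V), mstar v = v →
    abs n n ((k : ℂ) • v) = ((|k| : ℝ) : ℂ) • abs n n v
  absorb : ∀ n, ∀ u ∈ pos n, ∀ v ∈ pos n, ∀ w ∈ pos n,
    abs n n (u - v) = u + v → v - w ∈ pos n → abs n n (u - w) = u + w
  ortho_pm : ∀ n, ∀ u ∈ pos n, ∀ v ∈ pos n, ∀ w ∈ pos n,
    abs n n (u - v) = u + v → abs n n (u - w) = u + w →
    abs n n (u - abs n n (v + w)) = u + abs n n (v + w) ∧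
      abs n n (u - abs n n (v - w)) = u + abs n n (v - w)
  abs_smul_le : ∀ (r m n s : ℕ) (α : Matrix (Fin r) (Fin m) ℂ)
    (v : Matrix (Fin m) (Fin n) V) (β : Matrix (Fin n) (Fin s) ℂ),
    (cnorm α : ℂ) • abs n s (smulB (abs m n v) β) - abs r s (aSmul α (smulB v β)) ∈ pos s
  abs_dsum : ∀ (m n r s : ℕ) (v : Matrix (Fin m) (Fin n) V) (w : Matrix (Fin r) (Fin s) V),
    abs (m + r) (n + s) (dsum v w) = dsum (abs m n v) (abs r s w)

/-- A matrix order unit structure on top of an absolutely matrix ordered space: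
an order unit `e` with `V⁺` proper and each `Mₙ(V)⁺` Archimedean. -/
structure AMOUS (V : Type*) [AddCommGroup V] [Module ℂ V] [StarAddMonoid V]
    [StarModule ℂ V] extends AMOS V where
  e : V
  e_pos : diagE e 1 ∈ pos 1
  proper : ∀ v ∈ pos 1, -v ∈ pos 1 → v = 0
  arch : ∀ n (v : Matrix (Fin n) (Fin n) V), mstar v = v →
    (∀ k : ℝ, 0 < k → (k : ℂ) • diagE e n + v ∈ pos n) →
    v ∈ pos n
  unit : ∀ n (v : Matrix (Fin n) (Fin n) V), mstar v = v →
    ∃ k : ℝ, 0 < k ∧ (k : ℂ) • diagE e n - v ∈ pos n ∧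
      (k : ℂ) • diagE e n + v ∈ pos n

namespace AMOUS

variable {V : Type*} [AddCommGroup V] [Module ℂ V] [StarAddMonoid V] [StarModule ℂ V]
variable (A : AMOUS V)

/-- `eⁿ = e ⊕ ⋯ ⊕ e ∈ Mₙ(V)`. -/
def eN (n : ℕ) : Matrix (Fin n) (Fin n) V := diagE A.e n

/-- The `2n × 2n` matrix `[[a, b], [c, d]]` of `n × n` blocks. -/
def block2 {n : ℕ} (a b c d : Matrix (Fin n) (Fin n) V) :
    Matrix (Fin (n + n)) (Fin (n + n)) V :=
  fun i j =>
    if hi : (i : ℕ) < n then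
      (if hj : (j : ℕ) < n then a ⟨i, hi⟩ ⟨j, hj⟩
       else b ⟨i, hi⟩ ⟨(j : ℕ) - n, by have := j.isLt; omega⟩)
    else
      (if hj : (j : ℕ) < n then c ⟨(i : ℕ) - n, by have := i.isLt; omega⟩ ⟨j, hj⟩
       else d ⟨(i : ℕ) - n, by have := i.isLt; omega⟩ ⟨(j : ℕ) - n, by have := j.isLt; omega⟩)

end AMOUS
namespace AMOUS

variable {V : Type*} [AddCommGroup V] [Module ℂ V] [StarAddMonoid V] [StarModule ℂ V]
variable (A : AMOUS V)

/-- The matrix norms of a matrix order unit space: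
`‖v‖ₙ = inf { k > 0 : [[k eⁿ, v], [v*, k eⁿ]] ∈ M₂ₙ(V)⁺ }`. -/
def mnorm (n : ℕ) (v : Matrix (Fin n) (Fin n) V) : ℝ :=
  sInf {k : ℝ | 0 < k ∧
    block2 ((k : ℂ) • A.eN n) v (mstar v) ((k : ℂ) • A.eN n) ∈ A.pos (n + n)}

/-- Orthogonality `u ⊥ v` (for positive elements): `|u − v| = u + v`. -/
def Perp {n : ℕ} (u v : Matrix (Fin n) (Fin n) V) : Prop :=
  A.abs n n (u - v) = u + v

/-- `u ⊥_∞ v`: `‖k₁ u + k₂ v‖ = max {‖k₁ u‖, ‖k₂ v‖}` for all real `k₁, k₂`. -/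
def PerpInfM {n : ℕ} (u v : Matrix (Fin n) (Fin n) V) : Prop :=
  ∀ k₁ k₂ : ℝ, A.mnorm n ((k₁ : ℂ) • u + (k₂ : ℂ) • v) =
    max (A.mnorm n ((k₁ : ℂ) • u)) (A.mnorm n ((k₂ : ℂ) • v))

/-- `u ⊥_∞^a v`: absolute `∞`-orthogonality. -/
def PerpInfA {n : ℕ} (u v : Matrix (Fin n) (Fin n) V) : Prop :=
  ∀ u₁ ∈ A.pos n, ∀ v₁ ∈ A.pos n, u - u₁ ∈ A.pos n → v - v₁ ∈ A.pos n → A.PerpInfM u₁ v₁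

/-- `(V, {Mₙ(V)⁺}, {|·|}, e)` is an absolute matrix order unit space:
`⊥ = ⊥_∞^a` on each `Mₙ(V)⁺`. -/
def IsAbsolute : Prop :=
  ∀ n, ∀ u ∈ A.pos n, ∀ v ∈ A.pos n, (A.Perp u v ↔ A.PerpInfA u v)

/-- `p` is an order projection in `Mₙ(V)`: `p* = p` and `|2p − eⁿ| = eⁿ`. -/
def IsOP (n : ℕ) (p : Matrix (Fin n) (Fin n) V) : Prop :=
  mstar p = p ∧ A.abs n n ((2 : ℂ) • p - A.eN n) = A.eN n

/-- `v ∈ M_{m,n}(V)` is a partial isometry: `|v|` and `|v*|` are order projections. -/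
def IsPI {m n : ℕ} (v : Matrix (Fin m) (Fin n) V) : Prop :=
  A.IsOP n (A.abs m n v) ∧ A.IsOP m (A.abs n m (mstar v))

end AMOUS

/-- An element of `M_∞(V)`: a matrix at some level `n`. -/
def OPE (V : Type*) : Type _ := Σ n : ℕ, Matrix (Fin n) (Fin n) V

namespace OPE

variable {V : Type*} [AddCommGroup V] [Module ℂ V] [StarAddMonoid V] [StarModule ℂ V]

/-- Direct sum in `M_∞(V)`. -/
def d (p q : OPE V) : OPE V := ⟨p.1 + q.1, dsum p.2 q.2⟩

/-- The zero order projection (at level 1). -/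
def zero (V : Type*) [AddCommGroup V] : OPE V := ⟨1, 0⟩

end OPE

namespace AMOUS

variable {V : Type*} [AddCommGroup V] [Module ℂ V] [StarAddMonoid V] [StarModule ℂ V]
variable (A : AMOUS V)

/-- Membership in `𝒪𝒫_∞(V)`. -/
def IsOPE (p : OPE V) : Prop := A.IsOP p.1 p.2

/-- `eⁿ` as an element of `𝒪𝒫_∞(V)`. -/
def eOPE (n : ℕ) : OPE V := ⟨n, A.eN n⟩

/-- Partial isometric equivalence `p ∼ q` of order projections: there is a partial
isometry `v` with `p = |v*|` and `q = |v|`. -/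
def Sim (p q : OPE V) : Prop :=
  ∃ v : Matrix (Fin p.1) (Fin q.1) V,
    A.IsPI v ∧ p.2 = A.abs q.1 p.1 (mstar v) ∧ q.2 = A.abs p.1 q.1 v

/-- Condition (T). -/
def CondT : Prop :=
  ∀ (m n l : ℕ) (u : Matrix (Fin m) (Fin n) V) (v : Matrix (Fin l) (Fin n) V),
    A.IsPI u → A.IsPI v → A.abs m n u = A.abs l n v →
    ∃ w : Matrix (Fin m) (Fin l) V, A.IsPI w ∧
      A.abs l m (mstar w) = A.abs n m (mstar u) ∧ A.abs m l w = A.abs n l (mstar v)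

/-- Stabilized equivalence `p ≈ q`: `p ⊕ r ∼ q ⊕ r` for some order projection `r`. -/
def ASim (p q : OPE V) : Prop := ∃ r : OPE V, A.IsOPE r ∧ A.Sim (p.d r) (q.d r)

/-- A pair of order projections, representing an element `[(p,q)]` of `K₀(V)`. -/
def IsOPPair (x : OPE V × OPE V) : Prop := A.IsOPE x.1 ∧ A.IsOPE x.2

/-- The relation `(p₁,q₁) ≡ (p₂,q₂) ↔ p₁ ⊕ q₂ ≈ p₂ ⊕ q₁` defining `K₀(V)`. -/
def Krel (x y : OPE V × OPE V) : Prop := A.ASim (x.1.d y.2) (y.1.d x.2)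

/-- Addition of representatives of `K₀(V)` classes. -/
def kadd (x y : OPE V × OPE V) : OPE V × OPE V := (x.1.d y.1, x.2.d y.2)

/-- The representative of the zero class of `K₀(V)`. -/
def kzero : OPE V × OPE V := (OPE.zero V, OPE.zero V)

/-- Representative-level membership in the cone `K₀(V)⁺ = {[(p,0)] : p ∈ 𝒪𝒫_∞(V)}`. -/
def KPos (x : OPE V × OPE V) : Prop :=
  ∃ p : OPE V, A.IsOPE p ∧ A.Krel x (p, OPE.zero V)

/-- Representative-level order `[x] ≤ [y]` in `K₀(V)`: `[y] − [x] ∈ K₀(V)⁺`. -/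
def Kle (x y : OPE V × OPE V) : Prop :=
  ∃ r : OPE V, A.IsOPE r ∧ A.Krel (kadd x (r, OPE.zero V)) y

/-- The order projection `p ∈ Mₙ(V)` is finite: `q ∼ p` and `q ≥ p` imply `q = p`. -/
def FiniteOP (n : ℕ) (p : Matrix (Fin n) (Fin n) V) : Prop :=
  ∀ q : Matrix (Fin n) (Fin n) V, A.IsOP n q → A.Sim ⟨n, q⟩ ⟨n, p⟩ →
    q - p ∈ A.pos n → q = p

end AMOUS

/-! ### Maps between absolute matrix order unit spaces -/

section Maps

variable {V W : Type*} [AddCommGroup V] [Module ℂ V] [StarAddMonoid V] [StarModule ℂ V]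
  [AddCommGroup W] [Module ℂ W] [StarAddMonoid W] [StarModule ℂ W]

/-- The amplification `φₙ` (entrywise application) of a map. -/
def mmap (φ : V →ₗ[ℂ] W) {m n : ℕ} (v : Matrix (Fin m) (Fin n) V) :
    Matrix (Fin m) (Fin n) W :=
  fun i j => φ (v i j)

/-- `φ` is completely `|·|`-preserving: every amplification `φₙ` is `|·|`-preserving. -/
def CAbsPres (A : AMOUS V) (B : AMOUS W) (φ : V →ₗ[ℂ] W) : Prop :=
  ∀ (n : ℕ) (v : Matrix (Fin n) (Fin n) V), B.abs n n (mmap φ v) = mmap φ (A.abs n n v)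

/-- `φ` and `ψ` are completely orthogonal: `φₙ(u) ⊥ ψₙ(v)` for all positive `u, v`. -/
def COrth (A : AMOUS V) (B : AMOUS W) (φ ψ : V →ₗ[ℂ] W) : Prop :=
  ∀ (n : ℕ) (u v : Matrix (Fin n) (Fin n) V), u ∈ A.pos n → v ∈ A.pos n →
    B.Perp (mmap φ u) (mmap ψ v)

/-- The image of an element of `M_∞(V)` under (the amplifications of) `φ`. -/
def mmapOPE (φ : V →ₗ[ℂ] W) (p : OPE V) : OPE W := ⟨p.1, mmap φ p.2⟩

/-- `F` represents a group homomorphism `K₀(V) → K₀(W)` making the `K₀` diagram of `φ`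
commute: it maps `K₀`-representatives to `K₀`-representatives, respects the defining
relation `≡`, is additive, and satisfies `F([(p, 0)]) = [(φ(p), 0)]`. -/
def K0HomProp (A : AMOUS V) (B : AMOUS W) (φ : V →ₗ[ℂ] W)
    (F : OPE V × OPE V → OPE W × OPE W) : Prop :=
  (∀ x, A.IsOPPair x → B.IsOPPair (F x)) ∧
  (∀ x y, A.IsOPPair x → A.IsOPPair y → A.Krel x y → B.Krel (F x) (F y)) ∧
  (∀ x y, A.IsOPPair x → A.IsOPPair y → B.Krel (F (AMOUS.kadd x y)) (AMOUS.kadd (F x) (F y))) ∧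
  (∀ p : OPE V, A.IsOPE p → B.Krel (F (p, OPE.zero V)) (mmapOPE φ p, OPE.zero W))

/-- The completely bounded norm of `φ` with respect to the order unit matrix norms. -/
def cbNorm (A : AMOUS V) (B : AMOUS W) (φ : V →ₗ[ℂ] W) : ℝ :=
  ⨆ n : ℕ, sInf {c : ℝ | 0 ≤ c ∧
    ∀ v : Matrix (Fin n) (Fin n) V, B.mnorm n (mmap φ v) ≤ c * A.mnorm n v}

end Maps
/-! ### Matricial inductive limits -/

/-- `(𝕍, M)` together with the embeddings `Tₙ : Mₙ(V) → 𝕍` is the matricial inductive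
(direct) limit of the matrix levels of `V`: the `Tₙ` are injective `*`-linear maps,
compatible with the inclusions `v ↦ v ⊕ 0`, with image `𝔍ₙ 𝕍 𝔍ₙ`, intertwining the
scalar matrix actions with the `𝔉`-bimodule actions. -/
structure IsMatLimit (V : Type*) [AddCommGroup V] [Module ℂ V] [StarAddMonoid V]
    [StarModule ℂ V] {𝕍 : Type*} [AddCommGroup 𝕍] [Module ℂ 𝕍] (M : FBimod 𝕍)
    (T : ∀ n : ℕ, Matrix (Fin n) (Fin n) V → 𝕍) : Prop where
  map_add : ∀ n u v, T n (u + v) = T n u + T n v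
  map_smul : ∀ n (c : ℂ) v, T n (c • v) = c • T n v
  inj : ∀ n, Function.Injective (T n)
  map_star : ∀ n v, M.star (T n v) = T n (mstar v)
  embed : ∀ (n m : ℕ) (v : Matrix (Fin n) (Fin n) V),
    T (n + m) (dsum v (0 : Matrix (Fin m) (Fin m) V)) = T n v
  range : ∀ (n : ℕ) (x : 𝕍), M.cut n x = x → ∃ v, T n v = x
  cutT : ∀ n v, M.cut n (T n v) = T n v
  act : ∀ (n : ℕ) (a b : Matrix (Fin n) (Fin n) ℂ) (v : Matrix (Fin n) (Fin n) V),
    T n (aSmul a (smulB v b)) = M.lsmul (embC a) (M.rsmul (T n v) (embC b))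

/-- The axioms of an absolutely matrix ordered space `(V, {Mₙ(V)⁺}, {|·|ₙ})`,
formulated for the square levels. -/
structure IsAbsMatOrderedSq {V : Type*} [AddCommGroup V] [Module ℂ V] [StarAddMonoid V]
    [StarModule ℂ V] (pos : ∀ n : ℕ, Set (Matrix (Fin n) (Fin n) V))
    (abs : ∀ n : ℕ, Matrix (Fin n) (Fin n) V → Matrix (Fin n) (Fin n) V) : Prop where
  pos_star : ∀ n, ∀ v ∈ pos n, mstar v = v
  pos_add : ∀ n, ∀ u ∈ pos n, ∀ v ∈ pos n, u + v ∈ pos n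
  pos_conj : ∀ m n (a : Matrix (Fin n) (Fin m) ℂ), ∀ v ∈ pos n,
    aSmul a.conjTranspose (smulB v a) ∈ pos m
  abs_mem : ∀ n v, abs n v ∈ pos n
  abs_of_pos : ∀ n, ∀ v ∈ pos n, abs n v = v
  abs_add_self : ∀ n (v : Matrix (Fin n) (Fin n) V), mstar v = v →
    abs n v + v ∈ pos n ∧ abs n v - v ∈ pos n
  abs_real_smul : ∀ n (k : ℝ) (v : Matrix (Fin n) (Fin n) V), mstar v = v →
    abs n ((k : ℂ) • v) = ((|k| : ℝ) : ℂ) • abs n v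
  absorb : ∀ n, ∀ u ∈ pos n, ∀ v ∈ pos n, ∀ w ∈ pos n,
    abs n (u - v) = u + v → v - w ∈ pos n → abs n (u - w) = u + w
  ortho_pm : ∀ n, ∀ u ∈ pos n, ∀ v ∈ pos n, ∀ w ∈ pos n,
    abs n (u - v) = u + v → abs n (u - w) = u + w →
    abs n (u - abs n (v + w)) = u + abs n (v + w) ∧
      abs n (u - abs n (v - w)) = u + abs n (v - w)
  abs_smul_le : ∀ (n : ℕ) (α β : Matrix (Fin n) (Fin n) ℂ) (v : Matrix (Fin n) (Fin n) V),
    (cnorm α : ℂ) • abs n (smulB (abs n v) β) - abs n (aSmul α (smulB v β)) ∈ pos n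
  abs_dsum : ∀ (m n : ℕ) (u : Matrix (Fin m) (Fin m) V) (v : Matrix (Fin n) (Fin n) V),
    abs (m + n) (dsum u v) = dsum (abs m u) (abs n v)

/-!
`Tₙ` is an injective linear map onto `𝔍ₙ𝔙𝔍ₙ` that intertwines the actions of scalar matrices
with the bimodule actions, so each axiom at level `n` becomes a statement about `|·|` on
`𝔍ₙ𝔙𝔍ₙ`; most of them are axioms of the bimodule. The contraction axiom
`‖𝔞‖ |𝔳𝔟| ≥ |𝔞𝔳𝔟|`, applied to a unitary and to its inverse, and properness of the cone (a
consequence of `absorb`) make `|·|` invariant under unitary conjugation and positively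
homogeneous. Compressing the positive block matrix `[[|𝔵|, 𝔵], [𝔵, |𝔵|]]` by the column
`[𝔍, ±𝔎*]` gives `|𝔵| ± 𝔵 ≥ 0`. Finally `u ⊕ v = (u ⊕ 0) + (0 ⊕ v)` is a sum of
`𝔉`-independent elements and `0 ⊕ v` is a permutation conjugate of `v ⊕ 0`, whence
`|u ⊕ v| = |u| ⊕ |v|`.
-/

section FiniteMatrices

open scoped Matrix

lemma isFin_zero : IsFin 0 := ⟨0, fun _ _ _ => rfl⟩

lemma IsFin.add {a b : FMat} (ha : IsFin a) (hb : IsFin b) : IsFin (a + b) := by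
  obtain ⟨n, hn⟩ := ha
  obtain ⟨m, hm⟩ := hb
  refine ⟨max n m, fun i j hij => ?_⟩
  simp only [Pi.add_apply, hn i j (by omega), hm i j (by omega), add_zero]

lemma IsFin.smul (c : ℂ) {a : FMat} (ha : IsFin a) : IsFin (c • a) := by
  obtain ⟨n, hn⟩ := ha
  exact ⟨n, fun i j hij => by simp [hn i j hij]⟩

lemma IsFin.sub {a b : FMat} (ha : IsFin a) (hb : IsFin b) : IsFin (a - b) := by
  rw [sub_eq_add_neg, ← neg_one_smul ℂ b]
  exact ha.add (hb.smul _)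

lemma IsFin.fstar {a : FMat} (ha : IsFin a) : IsFin (fstar a) := by
  obtain ⟨n, hn⟩ := ha
  exact ⟨n, fun i j hij => by simp [_root_.fstar, hn j i (by omega)]⟩

lemma isFin_embC {r m : ℕ} (a : Matrix (Fin r) (Fin m) ℂ) : IsFin (embC a) :=
  ⟨r + m, fun i j hij => by unfold embC; split_ifs <;> first | rfl | omega⟩

lemma isFin_KMat (n : ℕ) : IsFin (KMat n) :=
  ⟨n + n, fun i j hij => by unfold KMat; split_ifs <;> first | rfl | omega⟩

lemma embC_one (N : ℕ) : embC (1 : Matrix (Fin N) (Fin N) ℂ) = JMat N := by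
  funext i j
  simp only [embC, JMat, Matrix.one_apply, Fin.mk.injEq]
  split_ifs <;> first | rfl | omega

lemma isFin_JMat (n : ℕ) : IsFin (JMat n) := embC_one n ▸ isFin_embC 1

lemma embC_smul {r m : ℕ} (c : ℂ) (a : Matrix (Fin r) (Fin m) ℂ) :
    embC (c • a) = c • embC a := by
  funext i j
  simp only [embC, Matrix.smul_apply, Pi.smul_apply, smul_eq_mul]
  split_ifs <;> simp

lemma fstar_embC {r m : ℕ} (a : Matrix (Fin r) (Fin m) ℂ) :
    fstar (embC a) = embC aᴴ := by
  funext i j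
  simp only [fstar, embC, Matrix.conjTranspose_apply, starRingEnd_apply]
  split_ifs <;> simp

lemma fmul_embC {r p s : ℕ} (a : Matrix (Fin r) (Fin p) ℂ) (b : Matrix (Fin p) (Fin s) ℂ) :
    fmul (embC a) (embC b) = embC (a * b) := by
  funext i k
  have hsupp : ∀ j ∉ Finset.range p, embC a i j * embC b j k = 0 := fun j hj => by
    rw [Finset.mem_range] at hj
    simp [embC, hj]
  rw [fmul, tsum_eq_sum hsupp, ← Fin.sum_univ_eq_sum_range (fun j => embC a i j * embC b j k)]
  simp only [embC, Matrix.mul_apply]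
  split_ifs <;> simp

lemma fstar_JMat (n : ℕ) : fstar (JMat n) = JMat n := by
  rw [← embC_one, fstar_embC, Matrix.conjTranspose_one]

lemma fmul_JMat_embC {N : ℕ} (a : Matrix (Fin N) (Fin N) ℂ) :
    fmul (JMat N) (embC a) = embC a := by
  rw [← embC_one, fmul_embC, Matrix.one_mul]

lemma fmul_embC_JMat {N : ℕ} (a : Matrix (Fin N) (Fin N) ℂ) :
    fmul (embC a) (JMat N) = embC a := by
  rw [← embC_one, fmul_embC, Matrix.mul_one]

lemma fmul_JMat_JMat (m n : ℕ) : fmul (JMat m) (JMat n) = JMat (min m n) := by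
  funext i k
  rw [fmul, tsum_eq_single i fun j hj => by simp [JMat, Ne.symm hj]]
  simp only [JMat]
  split_ifs <;> simp_all <;> omega

lemma fmul_JMat_self (n : ℕ) : fmul (JMat n) (JMat n) = JMat n := by
  rw [fmul_JMat_JMat, min_self]

lemma smul_fmul (c : ℂ) (a b : FMat) : fmul (c • a) b = c • fmul a b := by
  funext i k
  simp only [fmul, Pi.smul_apply, smul_eq_mul, ← tsum_mul_left, mul_assoc]

lemma fmul_smul (c : ℂ) (a b : FMat) : fmul a (c • b) = c • fmul a b := by
  funext i k
  simp only [fmul, Pi.smul_apply, smul_eq_mul, ← tsum_mul_left, mul_left_comm]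

lemma fstar_zero : fstar 0 = 0 := by
  funext i j; simp [fstar]

lemma fstar_add (a b : FMat) : fstar (a + b) = fstar a + fstar b := by
  funext i j; simp [fstar]

lemma fstar_sub (a b : FMat) : fstar (a - b) = fstar a - fstar b := by
  funext i j; simp [fstar]

lemma fstar_fstar (a : FMat) : fstar (fstar a) = a := by
  funext i j; simp [fstar]

lemma fmul_KMat_JMat (n : ℕ) : fmul (KMat n) (JMat n) = 0 := by
  funext i k
  have : ∀ j, KMat n i j * JMat n j k = 0 := fun j => by
    simp only [KMat, JMat]; split_ifs <;> first | omega | simp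
  simp [fmul, this]

lemma fmul_JMat_fstar_KMat (n : ℕ) : fmul (JMat n) (fstar (KMat n)) = 0 := by
  funext i k
  have : ∀ j, JMat n i j * fstar (KMat n) j k = 0 := fun j => by
    simp only [JMat, KMat, fstar]; split_ifs <;> first | omega | simp
  simp [fmul, this]

lemma fmul_KMat_fstar_KMat (n : ℕ) : fmul (KMat n) (fstar (KMat n)) = JMat n := by
  funext i k
  have : ∀ j, j ≠ i + n → KMat n i j * fstar (KMat n) j k = 0 := fun j hj => by
    simp [KMat, hj]
  rw [fmul, tsum_eq_single (i + n) this]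
  simp only [KMat, JMat, fstar]
  split_ifs <;> simp_all; omega

end FiniteMatrices

section Norms

open scoped Matrix

lemma norm_le_one_of_mem_unitary {E : Type*} [NormedRing E] [StarRing E] [CStarRing E] {U : E}
    (hU : U ∈ unitary E) : ‖U‖ ≤ 1 := by
  rcases subsingleton_or_nontrivial E with _ | _
  · simp [Subsingleton.elim U 0]
  · exact (CStarRing.norm_of_mem_unitary hU).le

def padM (N₁ N₂ : ℕ) {p q : ℕ} {α : Type*} [Zero α] (A : Matrix (Fin p) (Fin q) α) :
    Matrix (Fin N₁) (Fin N₂) α :=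
  fun i j => if h : (i : ℕ) < p then (if h' : (j : ℕ) < q then A ⟨i, h⟩ ⟨j, h'⟩ else 0) else 0

lemma padM_self {n : ℕ} {α : Type*} [Zero α] (A : Matrix (Fin n) (Fin n) α) :
    padM n n A = A := by
  funext i j
  simp [padM]

lemma embC_padM {p q N₁ N₂ : ℕ} (h₁ : p ≤ N₁) (h₂ : q ≤ N₂) (A : Matrix (Fin p) (Fin q) ℂ) :
    embC (padM N₁ N₂ A) = embC A := by
  funext i j
  simp only [embC, padM]
  split_ifs <;> first | rfl | omega

def inclM (p q : ℕ) : Matrix (Fin p) (Fin q) ℂ := Matrix.of fun i j => if (i : ℕ) = j then 1 else 0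

lemma norm_inclM_le (p q : ℕ) : ‖inclM p q‖ ≤ 1 := by
  have hdiag : (inclM p q)ᴴ * inclM p q =
      Matrix.diagonal fun j : Fin q => if (j : ℕ) < p then 1 else 0 := by
    ext j k
    rw [Matrix.mul_apply, Matrix.diagonal_apply]
    by_cases hj : (j : ℕ) < p
    · rw [Finset.sum_eq_single ⟨j, hj⟩ (fun i _ hi => by
        simp [inclM, Fin.ext_iff] at hi ⊢; intro h; omega) (by simp)]
      simp [inclM, Fin.ext_iff, hj]
    · rw [Finset.sum_eq_zero fun i _ => by simp [inclM]; omega]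
      simp [hj]
  have hd : ‖fun j : Fin q => (if (j : ℕ) < p then 1 else 0 : ℂ)‖ ≤ 1 :=
    (pi_norm_le_iff_of_nonneg zero_le_one).2 fun j => by split_ifs <;> simp
  have h := Matrix.l2_opNorm_conjTranspose_mul_self (inclM p q)
  rw [hdiag, Matrix.l2_opNorm_diagonal] at h
  nlinarith [norm_nonneg (inclM p q)]

lemma inclM_mul_apply {p n r : ℕ} (B : Matrix (Fin n) (Fin r) ℂ) (i : Fin p) (l : Fin r) :
    (inclM p n * B) i l = if h : (i : ℕ) < n then B ⟨i, h⟩ l else 0 := by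
  rw [Matrix.mul_apply]
  split_ifs with h
  · rw [Finset.sum_eq_single ⟨i, h⟩ (fun k _ hk => by
      simp [inclM, Fin.ext_iff] at hk ⊢; omega) (by simp)]
    simp [inclM]
  · exact Finset.sum_eq_zero fun k _ => by simp [inclM]; omega

lemma mul_inclM_conjTranspose_apply {p n r : ℕ} (B : Matrix (Fin r) (Fin n) ℂ) (k : Fin r)
    (j : Fin p) : (B * (inclM p n)ᴴ) k j = if h : (j : ℕ) < n then B k ⟨j, h⟩ else 0 := by
  rw [← Matrix.conjTranspose_conjTranspose (B * _), Matrix.conjTranspose_apply,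
    Matrix.conjTranspose_mul, Matrix.conjTranspose_conjTranspose, inclM_mul_apply]
  split_ifs <;> simp

lemma padM_eq_inclM_mul {p n : ℕ} (A : Matrix (Fin n) (Fin n) ℂ) :
    padM p p A = inclM p n * A * (inclM p n)ᴴ := by
  ext i j
  rw [Matrix.mul_assoc, inclM_mul_apply]
  simp only [padM, mul_inclM_conjTranspose_apply]

lemma fnorm_embC {n : ℕ} (A : Matrix (Fin n) (Fin n) ℂ) : fnorm (embC A) = ‖A‖ := by
  have hblock : ∀ p, (Matrix.of fun i j : Fin p => embC A i j) = padM p p A := fun _ => rfl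
  have hle : ∀ p, ‖padM p p A‖ ≤ ‖A‖ := fun p => by
    rw [padM_eq_inclM_mul]
    calc ‖inclM p n * A * (inclM p n)ᴴ‖ ≤ ‖inclM p n‖ * ‖A‖ * ‖inclM p n‖ := by
          refine (Matrix.l2_opNorm_mul _ _).trans ?_
          rw [Matrix.l2_opNorm_conjTranspose]
          gcongr
          exact Matrix.l2_opNorm_mul _ _
      _ ≤ 1 * ‖A‖ * 1 := by gcongr <;> exact norm_inclM_le p n
      _ = ‖A‖ := by ring
  simp only [fnorm, hblock]
  refine le_antisymm (ciSup_le hle) ?_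
  simpa [padM_self] using le_ciSup ⟨‖A‖, Set.forall_mem_range.2 hle⟩ n

lemma fnorm_embC_le_one {N : ℕ} {σ : Matrix (Fin N) (Fin N) ℂ}
    (hσ : σ ∈ Matrix.unitaryGroup (Fin N) ℂ) : fnorm (embC σ) ≤ 1 :=
  (fnorm_embC σ).trans_le (norm_le_one_of_mem_unitary hσ)

lemma permMatrix_mem_unitaryGroup {n : ℕ} (σ : Equiv.Perm (Fin n)) :
    σ.permMatrix ℂ ∈ Matrix.unitaryGroup (Fin n) ℂ := by
  rw [Matrix.mem_unitaryGroup_iff', Matrix.star_eq_conjTranspose, Matrix.conjTranspose_permMatrix,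
    ← Matrix.permMatrix_mul, mul_inv_cancel, Matrix.permMatrix_one]

end Norms

namespace FBimod

variable {𝕍 : Type*} [AddCommGroup 𝕍] [Module ℂ 𝕍] (M : FBimod 𝕍)

def lsmulHom (a : FMat) : 𝕍 →+ 𝕍 := AddMonoidHom.mk' (M.lsmul a) (M.lsmul_add a)

def rsmulHom (b : FMat) : 𝕍 →+ 𝕍 := AddMonoidHom.mk' (M.rsmul · b) (M.rsmul_add · · b)

lemma lsmul_zero (a : FMat) : M.lsmul a 0 = 0 := (M.lsmulHom a).map_zero

lemma lsmul_sub (a : FMat) (u v : 𝕍) : M.lsmul a (u - v) = M.lsmul a u - M.lsmul a v :=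
  (M.lsmulHom a).map_sub u v

lemma sub_rsmul (u v : 𝕍) (b : FMat) : M.rsmul (u - v) b = M.rsmul u b - M.rsmul v b :=
  (M.rsmulHom b).map_sub u v

lemma zero_lsmul (v : 𝕍) : M.lsmul 0 v = 0 := by
  simpa using M.add_lsmul 0 0 v isFin_zero isFin_zero

lemma rsmul_zero (v : 𝕍) : M.rsmul v 0 = 0 := by
  simpa using M.rsmul_add' v 0 0 isFin_zero isFin_zero

lemma sub_lsmul {a b : FMat} (ha : IsFin a) (hb : IsFin b) (v : 𝕍) :
    M.lsmul (a - b) v = M.lsmul a v - M.lsmul b v := by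
  rw [sub_eq_add_neg, ← neg_one_smul ℂ b, M.add_lsmul _ _ v ha (hb.smul _),
    M.smul_lsmul _ b v hb, neg_one_smul, sub_eq_add_neg]

lemma rsmul_sub {a b : FMat} (ha : IsFin a) (hb : IsFin b) (v : 𝕍) :
    M.rsmul v (a - b) = M.rsmul v a - M.rsmul v b := by
  rw [sub_eq_add_neg, ← neg_one_smul ℂ b, M.rsmul_add' v _ _ ha (hb.smul _),
    M.smul_rsmul _ v b hb, neg_one_smul, sub_eq_add_neg]

variable {M}

lemma lsmul_JMat_of_cut {N : ℕ} {z : 𝕍} (hz : M.cut N z = z) : M.lsmul (JMat N) z = z := by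
  rw [← hz, cut, ← M.mul_lsmul _ _ _ (isFin_JMat N) (isFin_JMat N), fmul_JMat_self]

lemma rsmul_JMat_of_cut {N : ℕ} {z : 𝕍} (hz : M.cut N z = z) : M.rsmul z (JMat N) = z := by
  rw [← hz, cut, M.lsmul_rsmul _ _ _ (isFin_JMat N) (isFin_JMat N),
    ← M.rsmul_mul _ _ _ (isFin_JMat N) (isFin_JMat N), fmul_JMat_self]

lemma cut_of_le {m N : ℕ} (h : m ≤ N) {z : 𝕍} (hz : M.cut m z = z) : M.cut N z = z := by
  conv_lhs => rw [← hz]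
  unfold cut
  rwa [M.lsmul_rsmul _ _ _ (isFin_JMat m) (isFin_JMat N),
    ← M.mul_lsmul _ _ _ (isFin_JMat N) (isFin_JMat m),
    ← M.rsmul_mul _ _ _ (isFin_JMat m) (isFin_JMat N), fmul_JMat_JMat, fmul_JMat_JMat,
    min_eq_right h, min_eq_left h]

lemma cut_ord (z : 𝕍) : M.cut (M.ord z) z = z := Nat.sInf_mem (M.nondeg z)

lemma ord_le_of_cut {N : ℕ} {z : 𝕍} (hz : M.cut N z = z) : M.ord z ≤ N := Nat.sInf_le hz

lemma cut_smul {N : ℕ} {z : 𝕍} (hz : M.cut N z = z) (c : ℂ) : M.cut N (c • z) = c • z := by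
  have hr : M.rsmul z (c • JMat N) = c • z := by
    rw [M.smul_rsmul c z _ (isFin_JMat N), rsmul_JMat_of_cut hz]
  have hl : M.lsmul (c • JMat N) z = c • z := M.smul_compat c N z hz
  rw [cut, ← hr, ← M.rsmul_mul _ _ _ ((isFin_JMat N).smul c) (isFin_JMat N), smul_fmul,
    fmul_JMat_self, hr, ← hl, ← M.mul_lsmul _ _ _ (isFin_JMat N) ((isFin_JMat N).smul c),
    fmul_smul, fmul_JMat_self]

lemma conj_sub (a : FMat) (u v : 𝕍) : M.conj a (u - v) = M.conj a u - M.conj a v := by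
  rw [conj, M.sub_rsmul, M.lsmul_sub, conj, conj]

lemma conj_embC_conj_embC {N : ℕ} (A B : Matrix (Fin N) (Fin N) ℂ) (x : 𝕍) :
    M.conj (embC B) (M.conj (embC A) x) = M.conj (embC (A * B)) x := by
  rw [conj, conj, conj, M.lsmul_rsmul _ _ _ (isFin_embC A).fstar (isFin_embC B),
    ← M.mul_lsmul _ _ _ (isFin_embC B).fstar (isFin_embC A).fstar,
    ← M.rsmul_mul _ _ _ (isFin_embC A) (isFin_embC B), fstar_embC, fstar_embC, fstar_embC,
    fmul_embC, fmul_embC, Matrix.conjTranspose_mul]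

lemma conj_JMat_of_cut {N : ℕ} {x : 𝕍} (hx : M.cut N x = x) : M.conj (JMat N) x = x := by
  rwa [conj, fstar_JMat]

lemma cut_rsmul_embC {N : ℕ} (σ : Matrix (Fin N) (Fin N) ℂ) {w : 𝕍} (hw : M.cut N w = w) :
    M.cut N (M.rsmul w (embC σ)) = M.rsmul w (embC σ) := by
  rw [cut, ← M.rsmul_mul _ _ _ (isFin_embC σ) (isFin_JMat N), fmul_embC_JMat,
    ← M.lsmul_rsmul _ _ _ (isFin_JMat N) (isFin_embC σ), lsmul_JMat_of_cut hw]

lemma cut_lsmul_embC {N : ℕ} (σ : Matrix (Fin N) (Fin N) ℂ) {w : 𝕍} (hw : M.cut N w = w) :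
    M.cut N (M.lsmul (embC σ) w) = M.lsmul (embC σ) w := by
  rw [cut, M.lsmul_rsmul _ _ _ (isFin_embC σ) (isFin_JMat N), rsmul_JMat_of_cut hw,
    ← M.mul_lsmul _ _ _ (isFin_JMat N) (isFin_embC σ), fmul_JMat_embC]

lemma cut_conj_embC {N : ℕ} (σ : Matrix (Fin N) (Fin N) ℂ) (x : 𝕍) :
    M.cut N (M.conj (embC σ) x) = M.conj (embC σ) x := by
  rw [conj, cut, fstar_embC, M.lsmul_rsmul _ _ _ (isFin_embC _) (isFin_JMat N),
    ← M.mul_lsmul _ _ _ (isFin_JMat N) (isFin_embC _), fmul_JMat_embC,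
    ← M.rsmul_mul _ _ _ (isFin_embC σ) (isFin_JMat N), fmul_embC_JMat]

section Blocks

variable {o : ℕ} {z : 𝕍}

lemma lsmul_KMat_of_cut (hz : M.cut o z = z) : M.lsmul (KMat o) z = 0 := by
  rw [← lsmul_JMat_of_cut hz, ← M.mul_lsmul _ _ _ (isFin_KMat o) (isFin_JMat o), fmul_KMat_JMat,
    M.zero_lsmul]

lemma rsmul_fstar_KMat_of_cut (hz : M.cut o z = z) : M.rsmul z (fstar (KMat o)) = 0 := by
  rw [← rsmul_JMat_of_cut hz, ← M.rsmul_mul _ _ _ (isFin_JMat o) (isFin_KMat o).fstar,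
    fmul_JMat_fstar_KMat, M.rsmul_zero]

lemma lsmul_KMat_lsmul_fstar_KMat_of_cut (hz : M.cut o z = z) :
    M.lsmul (KMat o) (M.lsmul (fstar (KMat o)) z) = z := by
  rw [← M.mul_lsmul _ _ _ (isFin_KMat o) (isFin_KMat o).fstar, fmul_KMat_fstar_KMat,
    lsmul_JMat_of_cut hz]

lemma rsmul_KMat_rsmul_fstar_KMat_of_cut (hz : M.cut o z = z) :
    M.rsmul (M.rsmul z (KMat o)) (fstar (KMat o)) = z := by
  rw [← M.rsmul_mul _ _ _ (isFin_KMat o) (isFin_KMat o).fstar, fmul_KMat_fstar_KMat,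
    rsmul_JMat_of_cut hz]

lemma lsmul_JMat_lsmul_fstar_KMat (z : 𝕍) :
    M.lsmul (JMat o) (M.lsmul (fstar (KMat o)) z) = 0 := by
  rw [← M.mul_lsmul _ _ _ (isFin_JMat o) (isFin_KMat o).fstar, fmul_JMat_fstar_KMat,
    M.zero_lsmul]

lemma rsmul_KMat_rsmul_JMat (z : 𝕍) : M.rsmul (M.rsmul z (KMat o)) (JMat o) = 0 := by
  rw [← M.rsmul_mul _ _ _ (isFin_KMat o) (isFin_JMat o), fmul_KMat_JMat, M.rsmul_zero]

variable {p x : 𝕍}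

lemma san_of_cut_of_star_eq (hx : M.cut o x = x) (hsa : M.star x = x) :
    M.san o x = M.rsmul x (KMat o) + M.lsmul (fstar (KMat o)) x := by
  rw [san, hsa, ← M.lsmul_rsmul _ _ _ (isFin_JMat o) (isFin_KMat o), lsmul_JMat_of_cut hx,
    rsmul_JMat_of_cut hx]

lemma pairPlus_add_rsmul_add_rsmul_JMat (hp : M.cut o p = p) (hx : M.cut o x = x) :
    M.rsmul (M.pairPlus o p p + (M.rsmul x (KMat o) + M.lsmul (fstar (KMat o)) x)) (JMat o) =
      p + M.lsmul (fstar (KMat o)) x := by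
  rw [pairPlus, M.rsmul_add, M.rsmul_add, M.rsmul_add, rsmul_JMat_of_cut hp,
    M.lsmul_rsmul _ _ _ (isFin_KMat o).fstar (isFin_JMat o), rsmul_KMat_rsmul_JMat, M.lsmul_zero,
    rsmul_KMat_rsmul_JMat, M.lsmul_rsmul _ _ _ (isFin_KMat o).fstar (isFin_JMat o),
    rsmul_JMat_of_cut hx, add_zero, zero_add]

lemma pairPlus_add_rsmul_add_rsmul_fstar_KMat (hp : M.cut o p = p) (hx : M.cut o x = x) :
    M.rsmul (M.pairPlus o p p + (M.rsmul x (KMat o) + M.lsmul (fstar (KMat o)) x))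
      (fstar (KMat o)) = M.lsmul (fstar (KMat o)) p + x := by
  rw [pairPlus, M.rsmul_add, M.rsmul_add, M.rsmul_add, rsmul_fstar_KMat_of_cut hp,
    M.lsmul_rsmul _ _ _ (isFin_KMat o).fstar (isFin_KMat o).fstar,
    rsmul_KMat_rsmul_fstar_KMat_of_cut hp, rsmul_KMat_rsmul_fstar_KMat_of_cut hx,
    M.lsmul_rsmul _ _ _ (isFin_KMat o).fstar (isFin_KMat o).fstar, rsmul_fstar_KMat_of_cut hx,
    M.lsmul_zero, zero_add, add_zero]

end Blocks

end FBimod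

namespace FBimod.IsAbsOrd

open scoped Matrix

variable {𝕍 : Type*} [AddCommGroup 𝕍] [Module ℂ 𝕍] {M : FBimod 𝕍} {C : Set 𝕍} {ab : 𝕍 → 𝕍}

lemma add_mem (hab : M.IsAbsOrd C ab) {u v : 𝕍} (hu : u ∈ C) (hv : v ∈ C) : u + v ∈ C :=
  hab.cone.2.1 u hu v hv

lemma conj_mem (hab : M.IsAbsOrd C ab) {v : 𝕍} (hv : v ∈ C) {a : FMat} (ha : IsFin a) :
    M.conj a v ∈ C :=
  hab.cone.2.2 v hv a ha

lemma zero_mem (hab : M.IsAbsOrd C ab) : (0 : 𝕍) ∈ C := by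
  simpa [FBimod.conj, fstar_zero, M.rsmul_zero, M.zero_lsmul] using
    hab.conj_mem (hab.abs_mem 0) isFin_zero

lemma abs_zero (hab : M.IsAbsOrd C ab) : ab 0 = 0 := hab.abs_of_mem 0 hab.zero_mem

lemma cut_abs (hab : M.IsAbsOrd C ab) {N : ℕ} {z : 𝕍} (hz : M.cut N z = z) :
    M.cut N (ab z) = ab z :=
  FBimod.cut_of_le ((hab.ord_abs_le z).trans (FBimod.ord_le_of_cut hz)) (FBimod.cut_ord _)

lemma smul_mem (hab : M.IsAbsOrd C ab) {z : 𝕍} (hz : z ∈ C) {r : ℝ} (hr : 0 ≤ r) :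
    (r : ℂ) • z ∈ C := by
  obtain ⟨N, hN⟩ := M.nondeg z
  set c : ℂ := (Real.sqrt r : ℂ)
  have hstar : fstar (c • JMat N) = c • JMat N := by
    rw [← embC_one, ← embC_smul, fstar_embC, Matrix.conjTranspose_smul, Matrix.conjTranspose_one,
      Complex.star_def, Complex.conj_ofReal]
  have hconj : M.conj (c • JMat N) z = (r : ℂ) • z := by
    rw [FBimod.conj, hstar, M.smul_rsmul c z _ (isFin_JMat N), FBimod.rsmul_JMat_of_cut hN,
      M.smul_compat c N _ (FBimod.cut_smul hN c), smul_smul, ← Complex.ofReal_mul,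
      Real.mul_self_sqrt hr]
  exact hconj ▸ hab.conj_mem hz ((isFin_JMat N).smul c)

lemma mem_of_add_self_mem (hab : M.IsAbsOrd C ab) {z : 𝕍} (hz : z + z ∈ C) : z ∈ C := by
  have h := hab.smul_mem hz (by norm_num : (0 : ℝ) ≤ 1 / 2)
  rwa [← two_smul ℂ z, smul_smul, Complex.ofReal_div, Complex.ofReal_one, Complex.ofReal_ofNat,
    one_div_mul_cancel two_ne_zero, one_smul] at h

/-- By `absorb` with `u = v = 0`, `z ∈ C` gives `ab (-z) = z`, while `-z ∈ C` gives
`ab (-z) = -z`. -/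
lemma eq_zero_of_mem_of_neg_mem (hab : M.IsAbsOrd C ab) {z : 𝕍} (hz : z ∈ C) (hz' : -z ∈ C) :
    z = 0 := by
  have habs : ab (-z) = z := by
    simpa using hab.absorb 0 hab.zero_mem 0 hab.zero_mem z hz (by simp [hab.abs_zero])
      (by simpa using hz')
  have h : z = -z := habs.symm.trans (hab.abs_of_mem _ hz')
  have h2 : (2 : ℂ) • z = 0 := by rw [two_smul]; nth_rewrite 2 [h]; exact add_neg_cancel z
  simpa using h2

lemma eq_of_sub_mem_of_sub_mem (hab : M.IsAbsOrd C ab) {u v : 𝕍} (huv : u - v ∈ C)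
    (hvu : v - u ∈ C) : u = v :=
  sub_eq_zero.mp (hab.eq_zero_of_mem_of_neg_mem huv (by rwa [neg_sub]))

lemma smul_abs_rsmul_sub_abs_mem (hab : M.IsAbsOrd C ab) {a b : FMat} (ha : IsFin a)
    (hb : IsFin b) {c : ℝ} (hc : fnorm a ≤ c) (v : 𝕍) :
    (c : ℂ) • ab (M.rsmul (ab v) b) - ab (M.lsmul a (M.rsmul v b)) ∈ C := by
  have h := hab.add_mem (hab.smul_mem (hab.abs_mem (M.rsmul (ab v) b)) (sub_nonneg.2 hc))
    (hab.abs_smul_le a b ha hb v)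
  rwa [Complex.ofReal_sub, sub_smul, sub_add_sub_cancel] at h

lemma smul_abs_sub_abs_lsmul_mem (hab : M.IsAbsOrd C ab) {a : FMat} (ha : IsFin a) {c : ℝ}
    (hc : fnorm a ≤ c) {N : ℕ} {y : 𝕍} (hy : M.cut N y = y) :
    (c : ℂ) • ab y - ab (M.lsmul a y) ∈ C := by
  simpa only [FBimod.rsmul_JMat_of_cut (hab.cut_abs hy), FBimod.rsmul_JMat_of_cut hy,
    hab.abs_of_mem _ (hab.abs_mem y)] using
    hab.smul_abs_rsmul_sub_abs_mem ha (isFin_JMat N) hc y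

lemma abs_lsmul_unitary (hab : M.IsAbsOrd C ab) {N : ℕ} {σ : Matrix (Fin N) (Fin N) ℂ}
    (hσ : σ ∈ Matrix.unitaryGroup (Fin N) ℂ) {x : 𝕍} (hx : M.cut N x = x) :
    ab (M.lsmul (embC σ) x) = ab x := by
  have hσ' : σᴴ ∈ Matrix.unitaryGroup (Fin N) ℂ := Unitary.star_mem hσ
  have hback : M.lsmul (embC σᴴ) (M.lsmul (embC σ) x) = x := by
    rw [← M.mul_lsmul _ _ _ (isFin_embC _) (isFin_embC _), fmul_embC,
      ← Matrix.star_eq_conjTranspose, Unitary.star_mul_self_of_mem hσ, embC_one,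
      FBimod.lsmul_JMat_of_cut hx]
  have h₁ := hab.smul_abs_sub_abs_lsmul_mem (isFin_embC σ) (fnorm_embC_le_one hσ) hx
  have h₂ := hab.smul_abs_sub_abs_lsmul_mem (isFin_embC σᴴ) (fnorm_embC_le_one hσ')
    (FBimod.cut_lsmul_embC σ hx)
  rw [Complex.ofReal_one, one_smul] at h₁ h₂
  rw [hback] at h₂
  exact hab.eq_of_sub_mem_of_sub_mem h₂ h₁

lemma conj_abs_sub_abs_conj_mem (hab : M.IsAbsOrd C ab) {N : ℕ}
    {σ : Matrix (Fin N) (Fin N) ℂ} (hσ : σ ∈ Matrix.unitaryGroup (Fin N) ℂ) {z : 𝕍}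
    (hz : M.cut N z = z) : M.conj (embC σ) (ab z) - ab (M.conj (embC σ) z) ∈ C := by
  have hσ' : σᴴ ∈ Matrix.unitaryGroup (Fin N) ℂ := Unitary.star_mem hσ
  have hconj : ∀ w, M.conj (embC σ) w = M.lsmul (embC σᴴ) (M.rsmul w (embC σ)) := fun w => by
    rw [FBimod.conj, fstar_embC]
  have hpos : ab (M.rsmul (ab z) (embC σ)) = M.conj (embC σ) (ab z) := by
    rw [← hab.abs_lsmul_unitary hσ' (FBimod.cut_rsmul_embC σ (hab.cut_abs hz)), ← hconj,
      hab.abs_of_mem _ (hab.conj_mem (hab.abs_mem z) (isFin_embC σ))]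
  have hJ : fnorm (JMat N) ≤ 1 := embC_one N ▸ fnorm_embC_le_one (one_mem _)
  have h := hab.smul_abs_rsmul_sub_abs_mem (isFin_JMat N) (isFin_embC σ) hJ z
  rwa [Complex.ofReal_one, one_smul, hpos,
    FBimod.lsmul_JMat_of_cut (FBimod.cut_rsmul_embC σ hz),
    ← hab.abs_lsmul_unitary hσ' (FBimod.cut_rsmul_embC σ hz), ← hconj] at h

lemma abs_conj_unitary (hab : M.IsAbsOrd C ab) {N : ℕ} {σ : Matrix (Fin N) (Fin N) ℂ}
    (hσ : σ ∈ Matrix.unitaryGroup (Fin N) ℂ) {x : 𝕍} (hx : M.cut N x = x) :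
    ab (M.conj (embC σ) x) = M.conj (embC σ) (ab x) := by
  have hσ' : σᴴ ∈ Matrix.unitaryGroup (Fin N) ℂ := Unitary.star_mem hσ
  have hy : M.cut N (M.conj (embC σ) x) = M.conj (embC σ) x := FBimod.cut_conj_embC σ x
  have hback : M.conj (embC σᴴ) (M.conj (embC σ) x) = x := by
    rw [FBimod.conj_embC_conj_embC, ← Matrix.star_eq_conjTranspose,
      Unitary.mul_star_self_of_mem hσ, embC_one, FBimod.conj_JMat_of_cut hx]
  have hforth : M.conj (embC σ) (M.conj (embC σᴴ) (ab (M.conj (embC σ) x))) =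
      ab (M.conj (embC σ) x) := by
    rw [FBimod.conj_embC_conj_embC, ← Matrix.star_eq_conjTranspose,
      Unitary.star_mul_self_of_mem hσ, embC_one, FBimod.conj_JMat_of_cut (hab.cut_abs hy)]
  have h₁ := hab.conj_abs_sub_abs_conj_mem hσ hx
  have h₂ := hab.conj_mem (hab.conj_abs_sub_abs_conj_mem hσ' hy) (isFin_embC σ)
  rw [hback, FBimod.conj_sub, hforth] at h₂
  exact hab.eq_of_sub_mem_of_sub_mem h₂ h₁

lemma abs_real_smul (hab : M.IsAbsOrd C ab) {N : ℕ} {x : 𝕍} (hx : M.cut N x = x) (k : ℝ) :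
    ab ((k : ℂ) • x) = ((|k| : ℝ) : ℂ) • ab x := by
  have hle : ∀ (r : ℝ) {y : 𝕍}, M.cut N y = y → ((|r| : ℝ) : ℂ) • ab y - ab ((r : ℂ) • y) ∈ C := by
    intro r y hy
    have hnorm : fnorm (embC ((r : ℂ) • (1 : Matrix (Fin N) (Fin N) ℂ))) ≤ |r| := by
      rw [fnorm_embC, norm_smul, Complex.norm_real, Real.norm_eq_abs]
      exact mul_le_of_le_one_right (abs_nonneg r) (norm_le_one_of_mem_unitary (one_mem _))
    simpa only [embC_smul, embC_one, M.smul_compat _ N y hy] using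
      hab.smul_abs_sub_abs_lsmul_mem (isFin_embC _) hnorm hy
  rcases eq_or_ne k 0 with rfl | hk
  · simp [hab.abs_zero]
  have h₂ := hab.smul_mem (hle k⁻¹ (FBimod.cut_smul hx (k : ℂ))) (abs_nonneg k)
  rw [smul_sub, smul_smul, smul_smul, ← Complex.ofReal_mul, ← Complex.ofReal_mul, abs_inv,
    mul_inv_cancel₀ (abs_ne_zero.2 hk), inv_mul_cancel₀ hk, Complex.ofReal_one, one_smul,
    one_smul] at h₂
  exact hab.eq_of_sub_mem_of_sub_mem h₂ (hle k hx)

lemma abs_add_self_mem_and_abs_sub_self_mem (hab : M.IsAbsOrd C ab) {x : 𝕍}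
    (hsa : M.star x = x) : ab x + x ∈ C ∧ ab x - x ∈ C := by
  set o := M.ord x
  have hx : M.cut o x = x := FBimod.cut_ord x
  have hp : M.cut o (ab x) = ab x := hab.cut_abs hx
  have hJ := isFin_JMat o
  have hK := isFin_KMat o
  have hB := hab.pos_part x
  rw [hsa, FBimod.san_of_cut_of_star_eq hx hsa] at hB
  have hBJ := FBimod.pairPlus_add_rsmul_add_rsmul_JMat hp hx
  have hBK := FBimod.pairPlus_add_rsmul_add_rsmul_fstar_KMat hp hx
  have hplus := hab.conj_mem hB (hJ.add hK.fstar)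
  have hminus := hab.conj_mem hB (hJ.sub hK.fstar)
  rw [FBimod.conj, fstar_add, fstar_JMat, fstar_fstar, M.rsmul_add' _ _ _ hJ hK.fstar, hBJ, hBK,
    M.add_lsmul _ _ _ hJ hK] at hplus
  rw [FBimod.conj, fstar_sub, fstar_JMat, fstar_fstar, M.rsmul_sub hJ hK.fstar, hBJ, hBK,
    M.sub_lsmul hJ hK] at hminus
  simp only [M.lsmul_add, M.lsmul_sub, FBimod.lsmul_JMat_of_cut hp, FBimod.lsmul_JMat_of_cut hx,
    FBimod.lsmul_JMat_lsmul_fstar_KMat, FBimod.lsmul_KMat_of_cut hp, FBimod.lsmul_KMat_of_cut hx,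
    FBimod.lsmul_KMat_lsmul_fstar_KMat_of_cut hp, FBimod.lsmul_KMat_lsmul_fstar_KMat_of_cut hx]
    at hplus hminus
  constructor
  · exact hab.mem_of_add_self_mem (by convert hplus using 1; abel)
  · exact hab.mem_of_add_self_mem (by convert hminus using 1; abel)

end FBimod.IsAbsOrd

section PaddedMatrices

variable {V : Type*} [AddCommGroup V] [Module ℂ V]

lemma sum_fin_eq_sum_castLE {β : Type*} [AddCommMonoid β] {p N : ℕ} (h : p ≤ N) (g : Fin N → β)
    (hg : ∀ k : Fin N, p ≤ (k : ℕ) → g k = 0) : ∑ k, g k = ∑ k : Fin p, g (Fin.castLE h k) :=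
  (Fintype.sum_of_injective _ (Fin.castLE_injective h) _ g
    (fun k hk => hg k (by by_contra hlt; exact hk ⟨⟨k, by omega⟩, rfl⟩)) fun _ => rfl).symm

lemma aSmul_padM {r p q N : ℕ} (hp : p ≤ N) (A : Matrix (Fin r) (Fin p) ℂ)
    (w : Matrix (Fin p) (Fin q) V) : aSmul (padM N N A) (padM N N w) = padM N N (aSmul A w) := by
  funext i j
  rw [aSmul, sum_fin_eq_sum_castLE hp _ fun k hk => by simp [padM, not_lt.2 hk]]
  simp only [padM, aSmul, Fin.val_castLE, Fin.is_lt, dite_true]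
  split_ifs <;> simp

lemma smulB_padM {q p s N : ℕ} (hp : p ≤ N) (v : Matrix (Fin q) (Fin p) V)
    (B : Matrix (Fin p) (Fin s) ℂ) : smulB (padM N N v) (padM N N B) = padM N N (smulB v B) := by
  funext i j
  rw [smulB, sum_fin_eq_sum_castLE hp _ fun k hk => by simp [padM, not_lt.2 hk]]
  simp only [padM, smulB, Fin.val_castLE, Fin.is_lt, dite_true]
  split_ifs <;> simp

lemma aSmul_diagonal {m n : ℕ} (d : Fin m → ℂ) (w : Matrix (Fin m) (Fin n) V) :
    aSmul (Matrix.diagonal d) w = Matrix.of fun i j => d i • w i j := by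
  funext i j
  simp [aSmul, Matrix.diagonal_apply, ite_smul]

lemma smulB_diagonal {m n : ℕ} (w : Matrix (Fin m) (Fin n) V) (d : Fin n → ℂ) :
    smulB w (Matrix.diagonal d) = Matrix.of fun i j => d j • w i j := by
  funext i j
  simp [smulB, Matrix.diagonal_apply, ite_smul]

lemma aSmul_one {m n : ℕ} (w : Matrix (Fin m) (Fin n) V) : aSmul 1 w = w := by
  rw [← Matrix.diagonal_one, aSmul_diagonal]
  simp only [one_smul]
  rfl

lemma aSmul_permMatrix {m n : ℕ} (σ : Equiv.Perm (Fin m)) (w : Matrix (Fin m) (Fin n) V) :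
    aSmul (σ.permMatrix ℂ) w = w.submatrix σ id := by
  funext i j
  simp [aSmul, PEquiv.toMatrix_apply, ite_smul]

lemma smulB_permMatrix {m n : ℕ} (w : Matrix (Fin m) (Fin n) V) (σ : Equiv.Perm (Fin n)) :
    smulB w (σ.permMatrix ℂ) = w.submatrix id σ.symm := by
  funext i j
  simp [smulB, PEquiv.toMatrix_apply, ite_smul, ← Equiv.eq_symm_apply]

end PaddedMatrices

section DirectSums

variable {V : Type*} [AddCommGroup V]

lemma padM_eq_dsum_zero {n k : ℕ} (v : Matrix (Fin n) (Fin n) V) :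
    padM (n + k) (n + k) v = dsum v (0 : Matrix (Fin k) (Fin k) V) := by
  funext i j
  simp only [padM, dsum]
  split_ifs <;> rfl

lemma dsum_eq_dsum_zero_add_dsum_zero {m n : ℕ} (u : Matrix (Fin m) (Fin m) V)
    (v : Matrix (Fin n) (Fin n) V) : dsum u v = dsum u 0 + dsum 0 v := by
  funext i j
  simp only [dsum, Matrix.add_apply]
  split_ifs <;> simp

def blockSwap (m n : ℕ) : Equiv.Perm (Fin (m + n)) := finAddFlip.trans (finCongr (Nat.add_comm n m))

lemma val_blockSwap {m n : ℕ} (i : Fin (m + n)) :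
    (blockSwap m n i : ℕ) = if (i : ℕ) < m then n + i else i - m := by
  obtain ⟨i, hi⟩ := i
  split_ifs with h
  · simp [blockSwap, finAddFlip_apply_mk_left h]
  · simp [blockSwap, finAddFlip_apply_mk_right (not_lt.1 h) hi]

lemma padM_submatrix_blockSwap {m n : ℕ} (v : Matrix (Fin n) (Fin n) V) :
    (padM (m + n) (m + n) v).submatrix (blockSwap m n) (blockSwap m n) = dsum 0 v := by
  funext i j
  have hi := val_blockSwap i
  have hj := val_blockSwap j
  simp only [Matrix.submatrix_apply, padM, dsum]
  split_ifs at hi hj ⊢ <;> first | rfl | omega |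
    exact congrArg₂ v (Fin.ext (by simp; omega)) (Fin.ext (by simp; omega))

lemma diagonal_compress_dsum_zero {m n : ℕ} [Module ℂ V] (v : Matrix (Fin n) (Fin n) V) :
    aSmul (Matrix.diagonal fun i : Fin (m + n) => if m ≤ (i : ℕ) then 1 else 0)
      (smulB (dsum 0 v) (Matrix.diagonal fun i : Fin (m + n) => if m ≤ (i : ℕ) then 1 else 0)) =
      dsum 0 v := by
  rw [smulB_diagonal, aSmul_diagonal]
  funext i j
  simp only [Matrix.of_apply, dsum]
  split_ifs <;> first | omega | simp

end DirectSums

namespace IsMatLimit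

open scoped Matrix

variable {V 𝕍 : Type*} [AddCommGroup V] [Module ℂ V] [StarAddMonoid V] [StarModule ℂ V]
  [AddCommGroup 𝕍] [Module ℂ 𝕍] {M : FBimod 𝕍} {C : Set 𝕍} {ab : 𝕍 → 𝕍}
  {T : ∀ n : ℕ, Matrix (Fin n) (Fin n) V → 𝕍}
  {absV : ∀ n : ℕ, Matrix (Fin n) (Fin n) V → Matrix (Fin n) (Fin n) V}

def toAddMonoidHom (hT : IsMatLimit V M T) (n : ℕ) : Matrix (Fin n) (Fin n) V →+ 𝕍 :=
  AddMonoidHom.mk' (T n) (hT.map_add n)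

lemma map_sub (hT : IsMatLimit V M T) {n : ℕ} (u v : Matrix (Fin n) (Fin n) V) :
    T n (u - v) = T n u - T n v :=
  (hT.toAddMonoidHom n).map_sub u v

lemma map_padM (hT : IsMatLimit V M T) {n N : ℕ} (h : n ≤ N) (v : Matrix (Fin n) (Fin n) V) :
    T N (padM N N v) = T n v := by
  obtain ⟨k, rfl⟩ := Nat.exists_eq_add_of_le h
  rw [padM_eq_dsum_zero, hT.embed]

lemma map_conj (hT : IsMatLimit V M T) {m n : ℕ} (a : Matrix (Fin n) (Fin m) ℂ)
    (v : Matrix (Fin n) (Fin n) V) : T m (aSmul aᴴ (smulB v a)) = M.conj (embC a) (T n v) := by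
  rw [← hT.map_padM (Nat.le_add_right m n), ← aSmul_padM (Nat.le_add_left n m),
    ← smulB_padM (Nat.le_add_left n m), hT.act, embC_padM (by omega) (by omega),
    embC_padM (by omega) (by omega), hT.map_padM (Nat.le_add_left n m), FBimod.conj, fstar_embC]

lemma map_smulB (hT : IsMatLimit V M T) {n : ℕ} (v : Matrix (Fin n) (Fin n) V)
    (β : Matrix (Fin n) (Fin n) ℂ) : T n (smulB v β) = M.rsmul (T n v) (embC β) := by
  rw [← aSmul_one (smulB v β), hT.act, embC_one, FBimod.lsmul_JMat_of_cut]
  exact FBimod.cut_rsmul_embC β (hT.cutT n v)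

lemma map_dsum (hT : IsMatLimit V M T) {m n : ℕ} (u : Matrix (Fin m) (Fin m) V)
    (v : Matrix (Fin n) (Fin n) V) : T (m + n) (dsum u v) = T m u + T (m + n) (dsum 0 v) := by
  rw [dsum_eq_dsum_zero_add_dsum_zero, hT.map_add, hT.embed]

lemma map_dsum_zero_left (hT : IsMatLimit V M T) {m n : ℕ} (v : Matrix (Fin n) (Fin n) V) :
    T (m + n) (dsum 0 v) = M.conj (embC ((blockSwap m n)⁻¹.permMatrix ℂ)) (T n v) := by
  rw [← hT.map_padM (Nat.le_add_left n m), FBimod.conj, fstar_embC, ← hT.act,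
    Matrix.conjTranspose_permMatrix, aSmul_permMatrix, smulB_permMatrix, inv_inv, Equiv.Perm.inv_def, Equiv.symm_symm, Matrix.submatrix_submatrix,
    Function.id_comp, Function.comp_id, padM_submatrix_blockSwap]

lemma fIndep_dsum (hT : IsMatLimit V M T) {m n : ℕ} (u : Matrix (Fin m) (Fin m) V)
    (v : Matrix (Fin n) (Fin n) V) : M.FIndep (T m u) (T (m + n) (dsum 0 v)) := by
  refine ⟨Finset.range m, Finset.Ico m (m + n), Finset.disjoint_left.2 fun k hk hk' => ?_, ?_, ?_⟩
  · simp only [Finset.mem_range, Finset.mem_Ico] at hk hk'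
    omega
  · have hJ : finsetDiag (Finset.range m) = JMat m := by
      funext k l; simp [finsetDiag, JMat]
    rw [hJ]
    exact hT.cutT m u
  · have hD : finsetDiag (Finset.Ico m (m + n)) =
        embC (Matrix.diagonal fun i : Fin (m + n) => if m ≤ (i : ℕ) then (1 : ℂ) else 0) := by
      funext k l
      simp only [finsetDiag, embC, Matrix.diagonal_apply, Finset.mem_Ico, Fin.mk.injEq]
      split_ifs <;> first | rfl | omega
    rw [hD, ← hT.act, diagonal_compress_dsum_zero]

lemma abs_dsum (hT : IsMatLimit V M T) (hab : M.IsAbsOrd C ab)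
    (habsV : ∀ n v, T n (absV n v) = ab (T n v)) {m n : ℕ} (u : Matrix (Fin m) (Fin m) V)
    (v : Matrix (Fin n) (Fin n) V) : absV (m + n) (dsum u v) = dsum (absV m u) (absV n v) := by
  have hv : M.cut (m + n) (T n v) = T n v :=
    FBimod.cut_of_le (Nat.le_add_left n m) (hT.cutT n v)
  apply hT.inj (m + n)
  rw [habsV, hT.map_dsum, hab.indep_add _ _ (hT.fIndep_dsum u v), hT.map_dsum_zero_left,
    hab.abs_conj_unitary (permMatrix_mem_unitaryGroup _) hv, ← habsV, ← habsV,
    ← hT.map_dsum_zero_left, ← hT.map_dsum]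

lemma isAbsMatOrderedSq (hT : IsMatLimit V M T) (hab : M.IsAbsOrd C ab)
    (habsV : ∀ n v, T n (absV n v) = ab (T n v)) :
    IsAbsMatOrderedSq (fun n => {v : Matrix (Fin n) (Fin n) V | T n v ∈ C}) absV where
  pos_star n v hv := hT.inj n (by rw [← hT.map_star]; exact hab.cone.1 _ hv)
  pos_add n u hu v hv := by
    simpa only [Set.mem_ofPred_eq, hT.map_add] using hab.add_mem hu hv
  pos_conj m n a v hv := by
    simpa only [Set.mem_ofPred_eq, hT.map_conj] using hab.conj_mem hv (isFin_embC a)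
  abs_mem n v := by simpa only [Set.mem_ofPred_eq, habsV] using hab.abs_mem (T n v)
  abs_of_pos n v hv := hT.inj n (by rw [habsV]; exact hab.abs_of_mem _ hv)
  abs_add_self n v hv := by
    simpa only [Set.mem_ofPred_eq, hT.map_add, hT.map_sub, habsV] using
      hab.abs_add_self_mem_and_abs_sub_self_mem (by rw [hT.map_star, hv])
  abs_real_smul n k v _ := hT.inj n (by
    rw [habsV, hT.map_smul, hT.map_smul, habsV]; exact hab.abs_real_smul (hT.cutT n v) k)
  absorb n u hu v hv w hw huv hvw := by
    rw [← (hT.inj n).eq_iff, habsV, hT.map_sub, hT.map_add] at huv ⊢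
    exact hab.absorb _ hu _ hv _ hw huv (by simpa only [Set.mem_ofPred_eq, hT.map_sub] using hvw)
  ortho_pm n u hu v hv w hw huv huw := by
    rw [← (hT.inj n).eq_iff, habsV, hT.map_sub, hT.map_add] at huv huw
    simp only [← (hT.inj n).eq_iff, habsV, hT.map_sub, hT.map_add]
    exact hab.ortho_pm _ hu _ hv _ hw huv huw
  abs_smul_le n α β v := by
    simpa only [Set.mem_ofPred_eq, hT.map_sub, hT.map_smul, habsV, hT.map_smulB, hT.act, cnorm,
      ← fnorm_embC] using hab.abs_smul_le _ _ (isFin_embC α) (isFin_embC β) (T n v)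
  abs_dsum _ _ := hT.abs_dsum hab habsV

end IsMatLimit

/-- Conversely, a non-degenerate absolutely ordered `𝔉`-bimodule
`(𝔙, 𝔙⁺, |·|)` induces, on the matrix ordered space `V` with `Mₙ(V)⁺ = Tₙ⁻¹(𝔍ₙ𝔙⁺𝔍ₙ)`
and `|v|ₙ := Tₙ⁻¹(|Tₙ(v)|)`, an absolutely matrix ordered space structure; in
particular `|u ⊕ v|_{m+n} = |u|_m ⊕ |v|ₙ`. -/
theorem statement6 {V 𝕍 : Type*} [AddCommGroup V] [Module ℂ V] [StarAddMonoid V]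
    [StarModule ℂ V] [AddCommGroup 𝕍] [Module ℂ 𝕍] (M : FBimod 𝕍) (C : Set 𝕍)
    (ab : 𝕍 → 𝕍) (hab : M.IsAbsOrd C ab)
    (T : ∀ n : ℕ, Matrix (Fin n) (Fin n) V → 𝕍) (hT : IsMatLimit V M T)
    (absV : ∀ n : ℕ, Matrix (Fin n) (Fin n) V → Matrix (Fin n) (Fin n) V)
    (habsV : ∀ (n : ℕ) (v : Matrix (Fin n) (Fin n) V), T n (absV n v) = ab (T n v)) :
    (∀ (m n : ℕ) (u : Matrix (Fin m) (Fin m) V) (v : Matrix (Fin n) (Fin n) V),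
      absV (m + n) (dsum u v) = dsum (absV m u) (absV n v)) ∧
      IsAbsMatOrderedSq (fun n => {v : Matrix (Fin n) (Fin n) V | T n v ∈ C}) absV :=
  ⟨fun _ _ => hT.abs_dsum hab habsV, hT.isAbsMatOrderedSq hab habsV⟩
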